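/- On the unit sphere (two-dimensional sphere of radius 1), consider a spherical triangle with vertices p̄, q̄, s̄ whose angles at q̄ and at s̄ are each at least π/2 and whose perimeter is less than π. Then q̄ = s̄; i.e., a nondegenerate spherical triangle of perimeter less than π cannot have two angles both ≥ π/2. -/

import Mathlib

open Real

/-- Spherical geodesic distance between unit vectors. -/
noncomputable def sphericalDist {n : ℕ} (x y : EuclideanSpace ℝ (Fin n)) : ℝ :=
  Real.arccos (inner ℝ x y : ℝ)

/-!
Write `a = d(p̄,q̄)`, `b = d(q̄,s̄)`, `c = d(p̄,s̄)`. Since the angles at `q̄` and `s̄` are obtuse and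
the sines of sides in `[0, π]` are nonnegative, the two cosine rules give
`cos c ≤ cos a cos b` and `cos a ≤ cos c cos b`. Adding them,
`cos a + cos c ≤ cos b (cos a + cos c)`, and `cos a + cos c > 0` because `a + c < π`.
Hence `cos b = 1`, i.e. `⟪q̄, s̄⟫ = 1`, which forces `q̄ = s̄` on the unit sphere.
-/

section SphericalDist

variable {n : ℕ}

lemma sphericalDist_comm (x y : EuclideanSpace ℝ (Fin n)) :
    sphericalDist x y = sphericalDist y x := by
  rw [sphericalDist, sphericalDist, real_inner_comm]

lemma sphericalDist_nonneg (x y : EuclideanSpace ℝ (Fin n)) : 0 ≤ sphericalDist x y :=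
  arccos_nonneg _

lemma sphericalDist_le_pi (x y : EuclideanSpace ℝ (Fin n)) : sphericalDist x y ≤ π :=
  arccos_le_pi _

lemma eq_of_cos_sphericalDist_eq_one {x y : EuclideanSpace ℝ (Fin n)}
    (hx : ‖x‖ = 1) (hy : ‖y‖ = 1) (h : cos (sphericalDist x y) = 1) : x = y := by
  have hle : inner ℝ x y ≤ 1 := by
    simpa [hx, hy] using real_inner_le_norm x y
  have hge : -1 ≤ inner ℝ x y := by
    simpa [hx, hy] using neg_le_of_abs_le (abs_real_inner_le_norm x y)
  rw [sphericalDist, cos_arccos hge hle] at h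
  exact (inner_eq_one_iff_of_norm_eq_one hx hy).1 h

end SphericalDist

lemma cos_le_cos_mul_cos_of_obtuse {a b c A : ℝ} (ha₀ : 0 ≤ a) (ha : a ≤ π)
    (hb₀ : 0 ≤ b) (hb : b ≤ π) (hA : A ∈ Set.Icc (π / 2) π)
    (h : cos c = cos a * cos b + sin a * sin b * cos A) :
    cos c ≤ cos a * cos b := by
  have hsin : 0 ≤ sin a * sin b :=
    mul_nonneg (sin_nonneg_of_nonneg_of_le_pi ha₀ ha) (sin_nonneg_of_nonneg_of_le_pi hb₀ hb)
  have hcos : cos A ≤ 0 := cos_nonpos_of_pi_div_two_le_of_le hA.1 (by linarith [hA.2, pi_pos])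
  nlinarith [mul_nonpos_of_nonneg_of_nonpos hsin hcos]

lemma cos_add_cos_pos_of_add_lt_pi {a c : ℝ} (ha : 0 ≤ a) (hc : 0 ≤ c) (hac : a + c < π) :
    0 < cos a + cos c := by
  have : cos (π - c) < cos a := cos_lt_cos_of_nonneg_of_le_pi ha (by linarith) (by linarith)
  rw [cos_pi_sub] at this
  linarith

theorem spherical_triangle_two_right_angles_general
    (p q s : EuclideanSpace ℝ (Fin 3))
    (hq : ‖q‖ = 1) (hs : ‖s‖ = 1)
    (A B : ℝ) (hA : A ∈ Set.Icc (π / 2) π) (hB : B ∈ Set.Icc (π / 2) π)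
    (hcosA : Real.cos (sphericalDist p s) =
      Real.cos (sphericalDist p q) * Real.cos (sphericalDist q s) +
        Real.sin (sphericalDist p q) * Real.sin (sphericalDist q s) * Real.cos A)
    (hcosB : Real.cos (sphericalDist p q) =
      Real.cos (sphericalDist p s) * Real.cos (sphericalDist s q) +
        Real.sin (sphericalDist p s) * Real.sin (sphericalDist s q) * Real.cos B)
    (hperim : sphericalDist p q + sphericalDist q s + sphericalDist s p < π) :
    q = s := by
  rw [sphericalDist_comm s q] at hcosB
  rw [sphericalDist_comm s p] at hperim
  have hc_le := cos_le_cos_mul_cos_of_obtuse (sphericalDist_nonneg p q) (sphericalDist_le_pi p q)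
    (sphericalDist_nonneg q s) (sphericalDist_le_pi q s) hA hcosA
  have ha_le := cos_le_cos_mul_cos_of_obtuse (sphericalDist_nonneg p s) (sphericalDist_le_pi p s)
    (sphericalDist_nonneg q s) (sphericalDist_le_pi q s) hB hcosB
  have hpos := cos_add_cos_pos_of_add_lt_pi (sphericalDist_nonneg p q) (sphericalDist_nonneg p s)
    (by linarith [sphericalDist_nonneg q s])
  refine eq_of_cos_sphericalDist_eq_one hq hs (le_antisymm (cos_le_one _) ?_)
  nlinarith

/-- On the unit two-dimensional sphere, a spherical triangle with perimeter
less than `π` cannot have two angles both `≥ π/2` unless the corresponding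
vertices coincide. The angles `A` at `q̄` and `B` at `s̄` are encoded via the
spherical law of cosines. -/
theorem spherical_triangle_two_right_angles
    (p q s : EuclideanSpace ℝ (Fin 3))
    (hp : ‖p‖ = 1) (hq : ‖q‖ = 1) (hs : ‖s‖ = 1)
    (A B : ℝ) (hA : A ∈ Set.Icc (π / 2) π) (hB : B ∈ Set.Icc (π / 2) π)
    (hcosA : Real.cos (sphericalDist p s) =
      Real.cos (sphericalDist p q) * Real.cos (sphericalDist q s) +
        Real.sin (sphericalDist p q) * Real.sin (sphericalDist q s) * Real.cos A)
    (hcosB : Real.cos (sphericalDist p q) =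
      Real.cos (sphericalDist p s) * Real.cos (sphericalDist s q) +
        Real.sin (sphericalDist p s) * Real.sin (sphericalDist s q) * Real.cos B)
    (hperim : sphericalDist p q + sphericalDist q s + sphericalDist s p < π) :
    q = s :=
  spherical_triangle_two_right_angles_general p q s hq hs A B hA hB hcosA hcosB hperim
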